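/- Let α ∈ (1,2) and d ≥ 1. There exists M ∈ ℕ such that for every (a₁, …, a_d) ∈ [0,∞)^d with at least one a_i > 0, the set { y > 0 : a_j y ≤ 1 for all j = 1,…,d, and y^{1/(2−α)} = Σ_{j=1}^d (2 − 2√(1 − a_j y)) } has at most M elements. -/

import Mathlib

noncomputable section

open MeasureTheory Real ENNReal

/-- Functions on the lattice `hℤ^d`, indexed by `n : Fin d → ℤ` (the physical point is `h • n`). -/
abbrev LatFn (d : ℕ) := (Fin d → ℤ) → ℂ

/-- The dot product `(h n) · ξ` of the lattice point `h n` with a frequency `ξ`. -/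
def latticeDot {d : ℕ} (h : ℝ) (n : Fin d → ℤ) (ξ : Fin d → ℝ) : ℝ :=
  ∑ i, (h * (n i : ℝ)) * ξ i

/-- The frequency box `[-π/h, π/h]^d`. -/
def freqBox (d : ℕ) (h : ℝ) : Set (Fin d → ℝ) :=
  Set.univ.pi fun _ => Set.Icc (-(π / h)) (π / h)

/-- Discrete Fourier transform `ℱ_h u (ξ) = h^d ∑_{x ∈ hℤ^d} u x e^{-i x·ξ}`. -/
def dft {d : ℕ} (h : ℝ) (u : LatFn d) (ξ : Fin d → ℝ) : ℂ :=
  (h : ℂ) ^ d * ∑' n : Fin d → ℤ, u n * Complex.exp (-(Complex.I * (latticeDot h n ξ : ℂ)))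

/-- Fourier multiplier operator on the lattice: `ℱ_h⁻¹ (m ⬝ ℱ_h u)`. -/
def dmul {d : ℕ} (h : ℝ) (m : (Fin d → ℝ) → ℂ) (u : LatFn d) : LatFn d :=
  fun n => (1 / (2 * π) ^ d : ℂ) *
    ∫ ξ in freqBox d h, m ξ * dft h u ξ * Complex.exp (Complex.I * (latticeDot h n ξ : ℂ))

/-- The symbol `(∑_i (4/h²) sin²(h ξ_i/2))^{α/2}` of the discrete fractional Laplacian. -/
def discSymb {d : ℕ} (h α : ℝ) (ξ : Fin d → ℝ) : ℝ :=
  (∑ i, (4 / h ^ 2) * Real.sin (h * ξ i / 2) ^ 2) ^ (α / 2)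

/-- The discrete fractional Laplacian `(-Δ_h)^{α/2}`. -/
def discFracLap {d : ℕ} (h α : ℝ) (u : LatFn d) : LatFn d :=
  dmul h (fun ξ => (discSymb h α ξ : ℂ)) u

/-- The discrete propagator `U_h(t) = e^{-it(-Δ_h)^{α/2}}`. -/
def Uh {d : ℕ} (h α t : ℝ) (u : LatFn d) : LatFn d :=
  dmul h (fun ξ => Complex.exp (-(Complex.I * ((t * discSymb h α ξ : ℝ) : ℂ)))) u

/-- The discrete Bessel operator `⟨∇_h⟩^s = ℱ_h⁻¹ ⟨ξ⟩^s ℱ_h`. -/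
def Js {d : ℕ} (h s : ℝ) (u : LatFn d) : LatFn d :=
  dmul h (fun ξ => (((1 + ∑ i, ξ i ^ 2) ^ (s / 2) : ℝ) : ℂ)) u

/-- The discrete Riesz operator `|∇_h|^s = ℱ_h⁻¹ |ξ|^s ℱ_h`. -/
def gradS {d : ℕ} (h s : ℝ) (u : LatFn d) : LatFn d :=
  dmul h (fun ξ => (((∑ i, ξ i ^ 2) ^ (s / 2) : ℝ) : ℂ)) u

/-- The `L_h^p` norm `h^{d/p} (∑ |u x|^p)^{1/p}`, valued in `ℝ≥0∞`. -/
def LhNorm {d : ℕ} (h p : ℝ) (u : LatFn d) : ℝ≥0∞ :=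
  ENNReal.ofReal (h ^ ((d : ℝ) / p)) * (∑' n, (‖u n‖₊ : ℝ≥0∞) ^ p) ^ (1 / p)

/-- The `L_h^∞` norm `sup_x |u x|`, valued in `ℝ≥0∞`. -/
def LhInfNorm {d : ℕ} (u : LatFn d) : ℝ≥0∞ := ⨆ n, (‖u n‖₊ : ℝ≥0∞)

/-- The discrete Sobolev norm `‖u‖_{H_h^s} = ‖⟨∇_h⟩^s u‖_{L_h²}`. -/
def HhNorm {d : ℕ} (h s : ℝ) (u : LatFn d) : ℝ≥0∞ := LhNorm h 2 (Js h s u)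

/-- Euclidean space `ℝ^d`. -/
abbrev Rd (d : ℕ) := EuclideanSpace ℝ (Fin d)

/-- Fourier transform on `ℝ^d` (convention `∫ f(x) e^{-i x·ξ} dx`). -/
def FT {d : ℕ} (f : Rd d → ℂ) (ξ : Rd d) : ℂ :=
  ∫ x : Rd d, f x * Complex.exp (-(Complex.I * ((inner ℝ x ξ : ℝ) : ℂ)))

/-- The continuous propagator `U(t) = e^{-it(-Δ)^{α/2}}`, given by the Fourier
multiplier `e^{-it|ξ|^α}`. -/
def Uc {d : ℕ} (α t : ℝ) (f : Rd d → ℂ) (x : Rd d) : ℂ :=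
  (1 / (2 * π) ^ d : ℂ) *
    ∫ ξ : Rd d, Complex.exp (Complex.I * (((inner ℝ x ξ : ℝ) - t * ‖ξ‖ ^ α : ℝ) : ℂ)) * FT f ξ

/-- The Sobolev `H^s(ℝ^d)` norm `‖⟨ξ⟩^s ℱf‖_{L²}`, valued in `ℝ≥0∞`. -/
def HsNorm {d : ℕ} (s : ℝ) (f : Rd d → ℂ) : ℝ≥0∞ :=
  eLpNorm (fun ξ : Rd d => (((1 + ‖ξ‖ ^ 2) ^ (s / 2) : ℝ) : ℂ) * FT f ξ) 2 volume

/-- The cell `h n + [0,h)^d` of the lattice point `h n`. -/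
def cell (d : ℕ) (h : ℝ) (n : Fin d → ℤ) : Set (Rd d) :=
  {y | ∀ i, y i ∈ Set.Ico (h * (n i : ℝ)) (h * (n i : ℝ) + h)}

/-- The discretization operator `d_h f (x) = h^{-d} ∫_{x+[0,h)^d} f`. -/
def dh {d : ℕ} (h : ℝ) (f : Rd d → ℂ) : LatFn d :=
  fun n => (1 / (h : ℂ) ^ d) * ∫ y in cell d h n, f y

/-- The linear interpolation operator `p_h`. -/
def ph {d : ℕ} (h : ℝ) (u : LatFn d) (y : Rd d) : ℂ :=
  u (fun i => ⌊y i / h⌋) +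
    ∑ i, ((u (fun j => ⌊y j / h⌋ + if j = i then 1 else 0) - u (fun i => ⌊y i / h⌋)) / (h : ℂ)) *
      (((y i - h * (⌊y i / h⌋ : ℝ)) : ℝ) : ℂ)

/-- The nonlinearity `|u|^{p-1} u` on the lattice. -/
def NLd {d : ℕ} (p : ℝ) (u : LatFn d) : LatFn d :=
  fun n => ((‖u n‖ ^ (p - 1) : ℝ) : ℂ) * u n

/-- The nonlinearity `|f|^{p-1} f` on `ℝ^d`. -/
def NLc {d : ℕ} (p : ℝ) (f : Rd d → ℂ) : Rd d → ℂ :=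
  fun x => ((‖f x‖ ^ (p - 1) : ℝ) : ℂ) * f x

/-- `u ∈ C([0,T]; H^s(ℝ^d))`. -/
def ContHsOn {d : ℕ} (s T : ℝ) (u : ℝ → Rd d → ℂ) : Prop :=
  ∀ t₀ ∈ Set.Icc (0 : ℝ) T, ∀ ε : ℝ, 0 < ε → ∃ δ > (0:ℝ), ∀ t ∈ Set.Icc (0 : ℝ) T,
    |t - t₀| < δ → HsNorm s (fun x => u t x - u t₀ x) < ENNReal.ofReal ε

/-- `u ∈ C([0,T]; L_h²)`. -/
def ContL2hOn {d : ℕ} (h T : ℝ) (u : ℝ → LatFn d) : Prop :=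
  ∀ t₀ ∈ Set.Icc (0 : ℝ) T, ∀ ε : ℝ, 0 < ε → ∃ δ > (0:ℝ), ∀ t ∈ Set.Icc (0 : ℝ) T,
    |t - t₀| < δ → LhNorm h 2 (fun n => u t n - u t₀ n) < ENNReal.ofReal ε

/-- `ω(ξ) = (∑_i (2 - 2 cos ξ_i))^{α/2}`. -/
def omegaFn (α : ℝ) {d : ℕ} (ξ : Fin d → ℝ) : ℝ :=
  (∑ i, (2 - 2 * Real.cos (ξ i))) ^ (α / 2)

/-- The gradient `∇ω(ξ) = (α/ω(ξ)^{(2-α)/α}) (sin ξ_1, …, sin ξ_d)`. -/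
def gradOmega (α : ℝ) {d : ℕ} (ξ : Fin d → ℝ) : Fin d → ℝ :=
  fun i => α * Real.sin (ξ i) / (∑ j, (2 - 2 * Real.cos (ξ j))) ^ ((2 - α) / 2)

/-- The Hessian matrix of `ω` at `ξ`, via the second derivative. -/
def hessOmega (α : ℝ) {d : ℕ} (ξ : Fin d → ℝ) : Matrix (Fin d) (Fin d) ℝ :=
  Matrix.of fun i j =>
    iteratedFDeriv ℝ 2 (omegaFn α (d := d)) ξ ![Pi.single i 1, Pi.single j 1]

/-- The phase `Φ_v(ξ) = v·ξ - ω(ξ)`. -/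
def phaseFn (α : ℝ) {d : ℕ} (v ξ : Fin d → ℝ) : ℝ :=
  (∑ i, v i * ξ i) - omegaFn α ξ

/-- The canonical embedding `ℝ^n → ℂ^n`. -/
def cplx {n : ℕ} (x : Fin n → ℝ) : EuclideanSpace ℂ (Fin n) := WithLp.toLp 2 (fun i => (x i : ℂ))

/-- The `C^M(Ω)` norm of `ζ`. -/
def CMnorm {n : ℕ} (M : ℕ) (Ω : Set (Fin n → ℝ)) (ζ : (Fin n → ℝ) → ℂ) : ℝ :=
  sSup {a : ℝ | ∃ k, k ≤ M ∧ ∃ x ∈ Ω, a = ‖iteratedFDeriv ℝ k ζ x‖}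

/-- The uniform oscillatory integral estimate `M(S, ξ₀) ≼ (β, 0)`. -/
def MLe {n : ℕ} (S : (Fin n → ℝ) → ℝ) (ξ₀ : Fin n → ℝ) (β : ℝ) : Prop :=
  ∃ r₀ > (0:ℝ), ∀ r : ℝ, 0 < r → r < r₀ →
    ∃ s > (0:ℝ), ∃ C > (0:ℝ), ∃ M : ℕ, ∃ Ω : Set (Fin n → ℝ),
      IsOpen Ω ∧ ξ₀ ∈ Ω ∧ Ω ⊆ Metric.ball ξ₀ r ∧
      ∀ P : EuclideanSpace ℂ (Fin n) → ℂ,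
        DifferentiableOn ℂ P (Metric.ball (cplx ξ₀) r) →
        ContinuousOn P (Metric.closedBall (cplx ξ₀) r) →
        (∀ x : Fin n → ℝ, cplx x ∈ Metric.closedBall (cplx ξ₀) r → (P (cplx x)).im = 0) →
        (∀ w ∈ Metric.closedBall (cplx ξ₀) r, ‖P w‖ < s) →
        ∀ ζ : (Fin n → ℝ) → ℂ, ContDiff ℝ (⊤ : ℕ∞) ζ → HasCompactSupport ζ → tsupport ζ ⊆ Ω →
          ∀ τ : ℝ,
            ‖∫ ξ : Fin n → ℝ,
                Complex.exp (Complex.I * (τ : ℂ) * ((S ξ + (P (cplx ξ)).re : ℝ) : ℂ)) * ζ ξ‖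
              ≤ C * (1 + |τ|) ^ β * CMnorm M Ω ζ

/-- The mixed norm `‖F‖_{L_t^q(ℝ)}` of a function of `t` valued in `ℝ≥0∞`. -/
def mixedLq (q : ℝ≥0∞) (F : ℝ → ℝ≥0∞) : ℝ≥0∞ :=
  if q = ∞ then essSup F volume else (∫⁻ t, F t ^ q.toReal) ^ (1 / q.toReal)

/-- The Hilbert space `L_h² = ℓ²(hℤ^d)`. -/
abbrev L2h (d : ℕ) := lp (fun _ : (Fin d → ℤ) => ℂ) 2


/-- Rolle-type zero counting: if `f'` has at most `n` zeros on `Ioo l u`, `f` has at most `n+1`. -/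
private lemma rolle_count {l u : ℝ} {f f' : ℝ → ℝ} {n : ℕ}
    (hd : ∀ x ∈ Set.Ioo l u, HasDerivAt f (f' x) x)
    (hfin : {x ∈ Set.Ioo l u | f' x = 0}.Finite)
    (hcard : {x ∈ Set.Ioo l u | f' x = 0}.ncard ≤ n) :
    {x ∈ Set.Ioo l u | f x = 0}.Finite ∧ {x ∈ Set.Ioo l u | f x = 0}.ncard ≤ n + 1 := by
  set Z : Set ℝ := {x ∈ Set.Ioo l u | f x = 0} with hZ
  have key : ∀ T : Finset ℝ, ↑T ⊆ Z → T.card ≤ n + 1 := by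
    intro T hT
    by_contra hlt
    push_neg at hlt
    obtain ⟨S, hST, hScard⟩ := T.exists_subset_card_eq (n := n + 2) (by omega)
    let e := S.orderIsoOfFin hScard
    set x : Fin (n + 2) → ℝ := fun i => (e i : ℝ) with hx
    have hxmono : StrictMono x := fun i j hij => Subtype.coe_lt_coe.2 (e.strictMono hij)
    have hxZ : ∀ i, x i ∈ Z := fun i => hT (hST (e i).2)
    have rolle : ∀ i : Fin (n + 1), ∃ c ∈ Set.Ioo (x i.castSucc) (x i.succ), f' c = 0 := by
      intro i
      have hab : x i.castSucc < x i.succ := hxmono (Fin.castSucc_lt_succ (i := i))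
      have hsub : Set.Icc (x i.castSucc) (x i.succ) ⊆ Set.Ioo l u := by
        intro z hz
        exact ⟨lt_of_lt_of_le (hxZ i.castSucc).1.1 hz.1, lt_of_le_of_lt hz.2 (hxZ i.succ).1.2⟩
      refine exists_hasDerivAt_eq_zero hab
        (fun z hz => ((hd z (hsub hz)).continuousAt.continuousWithinAt))
        (by rw [(hxZ i.castSucc).2, (hxZ i.succ).2])
        (fun z hz => hd z (hsub (Set.Ioo_subset_Icc_self hz)))
    choose c hc1 hc2 using rolle
    have hcmono : StrictMono c := by
      intro i j hij
      calc c i < x i.succ := (hc1 i).2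
        _ ≤ x j.castSucc := hxmono.monotone (by
            rw [Fin.le_def]
            simp only [Fin.val_succ, Fin.coe_castSucc]
            exact hij)
        _ < c j := (hc1 j).1
    have himg : Set.range c ⊆ {x ∈ Set.Ioo l u | f' x = 0} := by
      rintro _ ⟨i, rfl⟩
      exact ⟨⟨lt_trans (hxZ i.castSucc).1.1 (hc1 i).1,
        lt_trans (hc1 i).2 (hxZ i.succ).1.2⟩, hc2 i⟩
    have hrg : (Set.range c).ncard = n + 1 := by
      rw [← Nat.card_coe_set_eq, Nat.card_range_of_injective hcmono.injective,
        Nat.card_eq_fintype_card, Fintype.card_fin]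
    have := Set.ncard_le_ncard himg hfin
    omega
  have hZfin : Z.Finite := by
    by_contra h
    obtain ⟨T, hT, hTcard⟩ := Set.Infinite.exists_subset_card_eq h (n + 2)
    have := key T hT; omega
  refine ⟨hZfin, ?_⟩
  have := key hZfin.toFinset (by simp)
  rwa [Set.ncard_eq_toFinset_card Z hZfin]

private lemma chain_count {l u : ℝ} : ∀ (n : ℕ) (f : ℕ → ℝ → ℝ),
    (∀ i < n, ∀ x ∈ Set.Ioo l u, HasDerivAt (f i) (f (i + 1) x) x) →
    StrictMonoOn (f n) (Set.Ioo l u) →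
    {x ∈ Set.Ioo l u | f 0 x = 0}.Finite ∧ {x ∈ Set.Ioo l u | f 0 x = 0}.ncard ≤ n + 1 := by
  intro n
  induction n with
  | zero =>
    intro f _ hmono
    have hsub : {x ∈ Set.Ioo l u | f 0 x = 0}.Subsingleton := by
      intro x hx y hy
      exact hmono.injOn hx.1 hy.1 (hx.2.trans hy.2.symm)
    rcases hsub.eq_empty_or_singleton with h | ⟨x, h⟩ <;> rw [h] <;> simp
  | succ n ih =>
    intro f hd hmono
    obtain ⟨h1, h2⟩ := ih (fun i => f (i + 1)) (fun i hi => hd (i + 1) (by omega)) hmono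
    exact rolle_count (hd 0 (by omega)) h1 h2


private lemma hasDerivAt_one_sub_rpow (c p : ℝ) {x : ℝ} (h : 0 < 1 - c * x) :
    HasDerivAt (fun y => (1 - c * y) ^ p) (-(c * p * (1 - c * x) ^ (p - 1))) x := by
  have h1 : HasDerivAt (fun y : ℝ => 1 - c * y) (-c) x := by
    simpa using ((hasDerivAt_id x).const_mul c).const_sub 1
  have h2 := (Real.hasDerivAt_rpow_const (p := p) (Or.inl h.ne')).comp x h1
  exact h2.congr_deriv (by ring)

/-- The chain of derivatives of `∑ⱼ (2 - 2(1-aⱼy)^{1/2}) - y^β`. -/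
private noncomputable def chainF (β : ℝ) {d : ℕ} (a : Fin d → ℝ) : ℕ → ℝ → ℝ := fun i y =>
  if i = 0 then (∑ j, (2 - 2 * (1 - a j * y) ^ ((1:ℝ)/2))) - y ^ β
  else (∏ m ∈ Finset.range (i - 1), ((m : ℝ) + 1/2)) *
        (∑ j, (a j) ^ i * (1 - a j * y) ^ ((1:ℝ)/2 - (i : ℝ)))
      - (∏ m ∈ Finset.range i, (β - (m : ℝ))) * y ^ (β - (i : ℝ))

private lemma chainF_succ (β : ℝ) {d : ℕ} (a : Fin d → ℝ) (i : ℕ) :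
    chainF β a (i + 1) = fun y =>
      (∏ m ∈ Finset.range i, ((m : ℝ) + 1/2)) *
          (∑ j, (a j) ^ (i + 1) * (1 - a j * y) ^ ((1:ℝ)/2 - ((i + 1 : ℕ) : ℝ)))
        - (∏ m ∈ Finset.range (i + 1), (β - (m : ℝ))) * y ^ (β - ((i + 1 : ℕ) : ℝ)) := by
  funext y
  simp only [chainF]
  rw [if_neg (Nat.succ_ne_zero i), Nat.add_sub_cancel]

private lemma chainF_deriv {d : ℕ} (β : ℝ) (a : Fin d → ℝ) (i : ℕ) {x : ℝ}
    (hx0 : 0 < x) (hpos : ∀ j, 0 < 1 - a j * x) :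
    HasDerivAt (chainF β a i) (chainF β a (i + 1) x) x := by
  rcases Nat.eq_zero_or_pos i with rfl | hi
  · have hsum : HasDerivAt (fun y => ∑ j, (2 - 2 * (1 - a j * y) ^ ((1:ℝ)/2)))
        (∑ j, -(2 * (-(a j * ((1:ℝ)/2) * (1 - a j * x) ^ ((1:ℝ)/2 - 1))))) x := by
      apply HasDerivAt.fun_sum
      intro j _
      exact ((hasDerivAt_one_sub_rpow (a j) ((1:ℝ)/2) (hpos j)).const_mul 2).const_sub 2
    have hpow : HasDerivAt (fun y : ℝ => y ^ β) (β * x ^ (β - 1)) x :=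
      Real.hasDerivAt_rpow_const (Or.inl hx0.ne')
    have hval : chainF β a (0 + 1) x
        = (∑ j, -(2 * (-(a j * ((1:ℝ)/2) * (1 - a j * x) ^ ((1:ℝ)/2 - 1))))) - β * x ^ (β - 1) := by
      rw [chainF_succ]
      simp only [Finset.range_zero, Finset.prod_empty, one_mul, Finset.prod_range_one,
        Nat.cast_zero, Nat.cast_one, sub_zero, pow_one, zero_add]
      congr 1
      exact Finset.sum_congr rfl fun j _ => by ring
    have h0 : chainF β a 0 = fun y => (∑ j, (2 - 2 * (1 - a j * y) ^ ((1:ℝ)/2))) - y ^ β := by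
      funext y; simp [chainF]
    rw [h0, hval]
    exact hsum.sub hpow
  · obtain ⟨m, rfl⟩ : ∃ m, i = m + 1 := ⟨i - 1, by omega⟩
    set q : ℝ := (1:ℝ)/2 - ((m + 1 : ℕ) : ℝ) with hq
    have hsum : HasDerivAt (fun y => ∑ j, (a j) ^ (m + 1) * (1 - a j * y) ^ q)
        (∑ j, (a j) ^ (m + 1) * (-(a j * q * (1 - a j * x) ^ (q - 1)))) x := by
      apply HasDerivAt.fun_sum
      intro j _
      exact (hasDerivAt_one_sub_rpow (a j) q (hpos j)).const_mul _
    have hpow : HasDerivAt (fun y : ℝ => y ^ (β - ((m + 1 : ℕ) : ℝ)))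
        ((β - ((m + 1 : ℕ) : ℝ)) * x ^ (β - ((m + 1 : ℕ) : ℝ) - 1)) x :=
      Real.hasDerivAt_rpow_const (Or.inl hx0.ne')
    have hval : chainF β a (m + 1 + 1) x =
        (∏ mm ∈ Finset.range m, ((mm : ℝ) + 1/2)) *
            (∑ j, (a j) ^ (m + 1) * (-(a j * q * (1 - a j * x) ^ (q - 1))))
          - (∏ mm ∈ Finset.range (m + 1), (β - (mm : ℝ))) *
            ((β - ((m + 1 : ℕ) : ℝ)) * x ^ (β - ((m + 1 : ℕ) : ℝ) - 1)) := by
      have hexp1 : q - 1 = (1:ℝ)/2 - ((m + 1 + 1 : ℕ) : ℝ) := by rw [hq]; push_cast; ring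
      have hexp2 : β - ((m + 1 : ℕ) : ℝ) - 1 = β - ((m + 1 + 1 : ℕ) : ℝ) := by push_cast; ring
      simp only [chainF_succ]
      rw [hexp1, hexp2, Finset.prod_range_succ, Finset.prod_range_succ,
        Finset.mul_sum, Finset.mul_sum]
      congr 1
      · exact Finset.sum_congr rfl fun j _ => by rw [hq]; push_cast; ring
      · push_cast; ring
    rw [chainF_succ, hval]
    exact (hsum.const_mul _).sub (hpow.const_mul _)

private lemma chainF_zero (β : ℝ) {d : ℕ} (a : Fin d → ℝ) (y : ℝ) :
    chainF β a 0 y = (∑ j, (2 - 2 * (1 - a j * y) ^ ((1:ℝ)/2))) - y ^ β := by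
  simp [chainF]

private lemma chainF_mono {d : ℕ} {β : ℝ} (hβ1 : 1 < β) {a : Fin d → ℝ} (ha : ∀ j, 0 ≤ a j)
    {i₁ : Fin d} (hi₁ : ∀ j, a j ≤ a i₁) (hA : 0 < a i₁) {k : ℕ}
    (hβk : β ≤ (k : ℝ)) (hkβ : (k : ℝ) < β + 1) :
    StrictMonoOn (chainF β a k) (Set.Ioo 0 (1 / a i₁)) := by
  have hk0 : k ≠ 0 := by
    rintro rfl; simp only [Nat.cast_zero] at hβk; linarith
  have hpos : ∀ x ∈ Set.Ioo (0:ℝ) (1 / a i₁), ∀ j, 0 < 1 - a j * x := by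
    intro x hx j
    have h1 : a j * x ≤ a i₁ * x := mul_le_mul_of_nonneg_right (hi₁ j) hx.1.le
    have h2 : a i₁ * x < 1 := by rw [mul_comm]; exact (lt_div_iff₀ hA).1 hx.2
    linarith
  intro x hx y hy hxy
  simp only [chainF, if_neg hk0]
  have hD0 : (0:ℝ) < ∏ m ∈ Finset.range (k - 1), ((m : ℝ) + 1/2) :=
    Finset.prod_pos fun m _ => by positivity
  have hC0 : (0:ℝ) ≤ ∏ m ∈ Finset.range k, (β - (m : ℝ)) := by
    refine le_of_lt (Finset.prod_pos fun m hm => ?_)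
    have hmk : m + 1 ≤ k := Finset.mem_range.1 hm
    have : ((m:ℝ)) + 1 ≤ (k:ℝ) := by exact_mod_cast hmk
    linarith
  have hek : (1:ℝ)/2 - (k:ℝ) < 0 := by
    have : (1:ℝ) ≤ (k:ℝ) := by exact_mod_cast Nat.one_le_iff_ne_zero.2 hk0
    linarith
  have hsum : (∑ j, (a j) ^ k * (1 - a j * x) ^ ((1:ℝ)/2 - (k:ℝ)))
      < ∑ j, (a j) ^ k * (1 - a j * y) ^ ((1:ℝ)/2 - (k:ℝ)) := by
    have hterm : ∀ j, 0 < a j → (a j) ^ k * (1 - a j * x) ^ ((1:ℝ)/2 - (k:ℝ))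
        < (a j) ^ k * (1 - a j * y) ^ ((1:ℝ)/2 - (k:ℝ)) := by
      intro j hj
      refine mul_lt_mul_of_pos_left ?_ (by positivity)
      refine Real.rpow_lt_rpow_of_neg (hpos y hy j) ?_ hek
      have := mul_lt_mul_of_pos_left hxy hj
      linarith
    refine Finset.sum_lt_sum (fun j _ => ?_) ⟨i₁, Finset.mem_univ _, hterm i₁ hA⟩
    rcases (ha j).lt_or_eq with hj | hj
    · exact (hterm j hj).le
    · simp [← hj, zero_pow hk0]
  have h2 : (∏ m ∈ Finset.range k, (β - (m : ℝ))) * y ^ (β - (k:ℝ))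
      ≤ (∏ m ∈ Finset.range k, (β - (m : ℝ))) * x ^ (β - (k:ℝ)) :=
    mul_le_mul_of_nonneg_left
      (Real.rpow_le_rpow_of_nonpos hx.1 hxy.le (by linarith)) hC0
  have h1 := mul_lt_mul_of_pos_left hsum hD0
  linarith

/-- uniform root-counting bound for the critical point equation
`y^{1/(2-α)} = ∑_j (2 - 2√(1 - a_j y))`. -/
theorem uniform_root_count
    (α : ℝ) (hα : 1 < α ∧ α < 2) (d : ℕ) (hd : 1 ≤ d) :
    ∃ M : ℕ, ∀ a : Fin d → ℝ, (∀ j, 0 ≤ a j) → (∃ i, 0 < a i) →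
      {y : ℝ | 0 < y ∧ (∀ j, a j * y ≤ 1) ∧
          y ^ (1 / (2 - α)) = ∑ j, (2 - 2 * Real.sqrt (1 - a j * y))}.Finite ∧
      {y : ℝ | 0 < y ∧ (∀ j, a j * y ≤ 1) ∧
          y ^ (1 / (2 - α)) = ∑ j, (2 - 2 * Real.sqrt (1 - a j * y))}.ncard ≤ M := by
  obtain ⟨hα1, hα2⟩ := hα
  have h2α : (0:ℝ) < 2 - α := by linarith
  set β : ℝ := 1 / (2 - α) with hβdef
  have hβ1 : 1 < β := by
    rw [hβdef, lt_div_iff₀ h2α]; linarith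
  set k : ℕ := ⌈β⌉₊ with hk
  have hβk : β ≤ (k : ℝ) := Nat.le_ceil β
  have hkβ : (k : ℝ) < β + 1 := Nat.ceil_lt_add_one (by linarith)
  refine ⟨k + 2, ?_⟩
  rintro a ha ⟨i₀, hi₀⟩
  obtain ⟨i₁, -, hi₁⟩ := Finset.exists_max_image Finset.univ a ⟨i₀, Finset.mem_univ i₀⟩
  have hi₁' : ∀ j, a j ≤ a i₁ := fun j => hi₁ j (Finset.mem_univ j)
  have hA : 0 < a i₁ := lt_of_lt_of_le hi₀ (hi₁' i₀)
  set u : ℝ := 1 / a i₁ with hu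
  have hpos : ∀ x ∈ Set.Ioo (0:ℝ) u, ∀ j, 0 < 1 - a j * x := by
    intro x hx j
    have h1 : a j * x ≤ a i₁ * x := mul_le_mul_of_nonneg_right (hi₁' j) hx.1.le
    have h2 : a i₁ * x < 1 := by rw [mul_comm]; exact (lt_div_iff₀ hA).1 hx.2
    linarith
  obtain ⟨hfin, hcard⟩ := chain_count (l := 0) (u := u) k (chainF β a)
    (fun i _ x hx => chainF_deriv β a i hx.1 (hpos x hx))
    (chainF_mono hβ1 ha hi₁' hA hβk hkβ)
  have hsub : {y : ℝ | 0 < y ∧ (∀ j, a j * y ≤ 1) ∧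
      y ^ β = ∑ j, (2 - 2 * Real.sqrt (1 - a j * y))}
      ⊆ {x ∈ Set.Ioo (0:ℝ) u | chainF β a 0 x = 0} ∪ {u} := by
    rintro y ⟨hy0, hyle, hyeq⟩
    have hyu : y ≤ u := by
      rw [hu, le_div_iff₀ hA, mul_comm]
      exact hyle i₁
    rcases lt_or_eq_of_le hyu with h | h
    · left
      refine ⟨⟨hy0, h⟩, ?_⟩
      rw [chainF_zero]
      have hs : (∑ j, (2 - 2 * (1 - a j * y) ^ ((1:ℝ)/2)))
          = ∑ j, (2 - 2 * Real.sqrt (1 - a j * y)) :=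
        Finset.sum_congr rfl fun j _ => by rw [Real.sqrt_eq_rpow]
      rw [hs, ← hyeq, sub_self]
    · right; exact h
  constructor
  · exact ((hfin.union (Set.finite_singleton u)).subset hsub)
  · have h1 := Set.ncard_le_ncard hsub (hfin.union (Set.finite_singleton u))
    have h2 := Set.ncard_union_le {x ∈ Set.Ioo (0:ℝ) u | chainF β a 0 x = 0} {u}
    have h3 : ({u} : Set ℝ).ncard = 1 := Set.ncard_singleton u
    omega
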